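/- arXiv:math/0508359 — 5 statements merged into one kernel-verified Lean document; each statement's English description precedes it below -/
import Mathlib

section
/- A set G ⊆ L_≻ is a ≻-Gröbner basis of L if and only if for each b ∈ ℤ^n and each pair x, y ∈ F_{L,b}, there exists a ≻-reduction path in G(F_{L,b}, G) between x and y. -/
open scoped Classical

noncomputable section

variable {ι : Type*} [Fintype ι]

/-- `x ∈ ℕ^n`, i.e. all coordinates nonnegative. -/
def Nonneg (x : ι → ℤ) : Prop := ∀ i, 0 ≤ x i

/-- componentwise positive part `u⁺`. -/
def vposPart (x : ι → ℤ) : ι → ℤ := fun i => max (x i) 0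

/-- componentwise negative part `u⁻`. -/
def vnegPart (x : ι → ℤ) : ι → ℤ := fun i => max (-x i) 0

/-- support of a vector. -/
def suppV (x : ι → ℤ) : Set ι := {i | x i ≠ 0}

/-- membership in the fiber `F_{L,b} = {x ∈ ℕ^n : x ≡ b (mod L)}`. -/
def inFiber (L : AddSubgroup (ι → ℤ)) (b x : ι → ℤ) : Prop :=
  Nonneg x ∧ x - b ∈ L

/-- adjacency in the fiber graph: `x` and `y` differ by an element of `±S`. -/
def adjS (S : Set (ι → ℤ)) (x y : ι → ℤ) : Prop := x - y ∈ S ∨ y - x ∈ S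

/-- `p 0, p 1, …, p k` is a path in the fiber graph `G(F_{L,b}, S)`. -/
def IsPathIn (L : AddSubgroup (ι → ℤ)) (S : Set (ι → ℤ)) (b : ι → ℤ)
    (k : ℕ) (p : ℕ → ι → ℤ) : Prop :=
  (∀ i ≤ k, inFiber L b (p i)) ∧ ∀ i < k, adjS S (p i) (p (i+1))

/-- `x` and `y` are connected in the fiber graph `G(F_{L,b}, S)`. -/
def ConnIn (L : AddSubgroup (ι → ℤ)) (S : Set (ι → ℤ)) (b x y : ι → ℤ) : Prop :=
  ∃ k p, IsPathIn L S b k p ∧ p 0 = x ∧ p k = y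

/-- `S` is a generating set of the lattice `L`: all fiber graphs are connected. -/
def IsGenSet (L : AddSubgroup (ι → ℤ)) (S : Set (ι → ℤ)) : Prop :=
  ∀ b x y, inFiber L b x → inFiber L b y → ConnIn L S b x y

/-- `succ` (written `≻`) is a term ordering for `L`: an additive total
well-ordering on every fiber. -/
structure IsTermOrder (L : AddSubgroup (ι → ℤ))
    (succ : (ι → ℤ) → (ι → ℤ) → Prop) : Prop where
  trans : ∀ {x y z}, succ x y → succ y z → succ x z
  irrefl : ∀ x, ¬ succ x x
  total : ∀ b x y, inFiber L b x → inFiber L b y → x ≠ y → succ x y ∨ succ y x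
  additive : ∀ x y γ, Nonneg γ → succ x y → succ (x + γ) (y + γ)
  wf : ∀ b, WellFounded (fun x y : ι → ℤ => inFiber L b x ∧ inFiber L b y ∧ succ y x)

/-- `L_≻ = {u ∈ L : u⁺ ≻ u⁻}`. -/
def Lpos (L : AddSubgroup (ι → ℤ)) (succ : (ι → ℤ) → (ι → ℤ) → Prop) :
    Set (ι → ℤ) :=
  {u | u ∈ L ∧ succ (vposPart u) (vnegPart u)}

/-- `m` is the `≻`-minimal element of the fiber `F_{L,b}`. -/
def IsMinimalFiber (L : AddSubgroup (ι → ℤ)) (b : ι → ℤ)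
    (succ : (ι → ℤ) → (ι → ℤ) → Prop) (m : ι → ℤ) : Prop :=
  inFiber L b m ∧ ∀ y, inFiber L b y → y ≠ m → succ y m

/-- `G` is a `≻`-Gröbner basis of `L`: from every `x ∈ ℕ^n` there is a
`≻`-decreasing path in `G(F_{L,x},G)` to the `≻`-minimal element of `F_{L,x}`. -/
def IsGroebner (L : AddSubgroup (ι → ℤ)) (succ : (ι → ℤ) → (ι → ℤ) → Prop)
    (G : Set (ι → ℤ)) : Prop :=
  ∀ x, Nonneg x → ∃ m, IsMinimalFiber L x succ m ∧
    ∃ k p, IsPathIn L G x k p ∧ p 0 = x ∧ p k = m ∧ ∀ i < k, succ (p i) (p (i+1))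

/-- there is a `≻`-reduction path from `x` to `y` in `G(F_{L,b},G)`:
no intermediate node is `≻` than both endpoints. -/
def IsRedPath (L : AddSubgroup (ι → ℤ)) (G : Set (ι → ℤ)) (b : ι → ℤ)
    (succ : (ι → ℤ) → (ι → ℤ) → Prop) (x y : ι → ℤ) : Prop :=
  ∃ k p, IsPathIn L G b k p ∧ p 0 = x ∧ p k = y ∧
    ∀ i, 0 < i → i < k → ¬ (succ (p i) x ∧ succ (p i) y)

/-- `(x,z,y)` is a `≻`-critical path in `G(F_{L,b},G)`. -/
def IsCriticalIn (L : AddSubgroup (ι → ℤ)) (G : Set (ι → ℤ)) (b : ι → ℤ)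
    (succ : (ι → ℤ) → (ι → ℤ) → Prop) (x z y : ι → ℤ) : Prop :=
  inFiber L b x ∧ inFiber L b z ∧ inFiber L b y ∧
  adjS G x z ∧ adjS G z y ∧ succ z x ∧ succ z y

/-- `z^(u,v) := max{u⁺, v⁺}` componentwise. -/
def zOf (u v : ι → ℤ) : ι → ℤ := fun i => max (vposPart u i) (vposPart v i)

/-- `x^(u,v) := z^(u,v) − u`. -/
def xOf (u v : ι → ℤ) : ι → ℤ := zOf u v - u

/-- `y^(u,v) := z^(u,v) − v`. -/
def yOf (u v : ι → ℤ) : ι → ℤ := zOf u v - v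

/-- `(x,z,y)` is a `≻`-critical path for the pair `(u,v)`. -/
def IsCriticalFor (succ : (ι → ℤ) → (ι → ℤ) → Prop) (u v x z y : ι → ℤ) : Prop :=
  Nonneg x ∧ Nonneg z ∧ Nonneg y ∧ z - x = u ∧ z - y = v ∧ succ z x ∧ succ z y

/-- rational inner product `φ·x`. -/
def qdot (φ : ι → ℚ) (x : ι → ℤ) : ℚ := ∑ i, φ i * (x i : ℚ)

/-- there is a `φ`-reduction path from `x` to `y` in `G(F_{L,b},G)`. -/
def IsPhiRedPath (L : AddSubgroup (ι → ℤ)) (G : Set (ι → ℤ)) (b : ι → ℤ)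
    (φ : ι → ℚ) (x y : ι → ℤ) : Prop :=
  ∃ k p, IsPathIn L G b k p ∧ p 0 = x ∧ p k = y ∧
    ∀ i, 0 < i → i < k → ¬ (qdot φ x < qdot φ (p i) ∧ qdot φ y < qdot φ (p i))

/-- `G` is a `φ`-Gröbner basis of `L`. -/
def IsPhiGroebner (L : AddSubgroup (ι → ℤ)) (φ : ι → ℚ) (G : Set (ι → ℤ)) : Prop :=
  ∀ b x y, inFiber L b x → inFiber L b y → IsPhiRedPath L G b φ x y

/-- `x ∧_σ y`: componentwise min on `σ`, zero elsewhere. -/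
def meetOn (σ : Set ι) (x y : ι → ℤ) : ι → ℤ :=
  fun i => if i ∈ σ then min (x i) (y i) else 0

/-- `T` is `σ`-saturated on `S`. -/
def IsSaturatedOn (L : AddSubgroup (ι → ℤ)) (σ : Set ι) (S T : Set (ι → ℤ)) : Prop :=
  ∀ b x y, inFiber L b x → inFiber L b y → ConnIn L S b x y →
    ConnIn L T (b - meetOn σ x y) (x - meetOn σ x y) (y - meetOn σ x y)

/-- membership in `F^σ_{L,b}`: nonnegative outside `σ`. -/
def inFiberFree (L : AddSubgroup (ι → ℤ)) (σ : Set ι) (b x : ι → ℤ) : Prop :=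
  (∀ i, i ∉ σ → 0 ≤ x i) ∧ x - b ∈ L

/-- path in the graph `G(F^σ_{L,b}, S)`. -/
def IsPathFree (L : AddSubgroup (ι → ℤ)) (σ : Set ι) (S : Set (ι → ℤ)) (b : ι → ℤ)
    (k : ℕ) (p : ℕ → ι → ℤ) : Prop :=
  (∀ i ≤ k, inFiberFree L σ b (p i)) ∧ ∀ i < k, adjS S (p i) (p (i+1))

/-- connectivity in `G(F^σ_{L,b}, S)`. -/
def ConnFree (L : AddSubgroup (ι → ℤ)) (σ : Set ι) (S : Set (ι → ℤ))
    (b x y : ι → ℤ) : Prop :=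
  ∃ k p, IsPathFree L σ S b k p ∧ p 0 = x ∧ p k = y

/-- `S` is a `σ`-generating set of `L`. -/
def IsGenSetFree (L : AddSubgroup (ι → ℤ)) (σ : Set ι) (S : Set (ι → ℤ)) : Prop :=
  ∀ b x y, inFiberFree L σ b x → inFiberFree L σ b y → ConnFree L σ S b x y

/-- there is a `z`-bounded path from `x` to `y` in `G(F_{L,b},G)`:
all nodes are `≺ z`. -/
def IsBoundedPath (L : AddSubgroup (ι → ℤ)) (G : Set (ι → ℤ)) (b : ι → ℤ)
    (succ : (ι → ℤ) → (ι → ℤ) → Prop) (z x y : ι → ℤ) : Prop :=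
  ∃ k p, IsPathIn L G b k p ∧ p 0 = x ∧ p k = y ∧ ∀ i ≤ k, succ z (p i)

/-- `ē^i = −e^i` as a rational vector. -/
def ebar [DecidableEq ι] (i : ι) : ι → ℚ := fun j => if j = i then -1 else 0

/-- projection deleting the `i`-th coordinate. -/
def projCoord {n : ℕ} (i : Fin (n+1)) : (Fin (n+1) → ℤ) →+ (Fin n → ℤ) where
  toFun x := fun j => x (i.succAbove j)
  map_zero' := rfl
  map_add' _ _ := rfl

/-- projection onto the coordinates outside `σ`. -/
def projSet {n : ℕ} (σ : Finset (Fin n)) :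
    (Fin n → ℤ) →+ ({ i : Fin n // i ∉ σ } → ℤ) where
  toFun x := fun j => x j.1
  map_zero' := rfl
  map_add' _ _ := rfl

end

section AuxStmt1

variable {n : ℕ}

lemma inFiber_congr {L : AddSubgroup (Fin n → ℤ)} {b b' : Fin n → ℤ}
    (h : b - b' ∈ L) (z : Fin n → ℤ) : inFiber L b z ↔ inFiber L b' z := by
  constructor
  · rintro ⟨h1, h2⟩
    refine ⟨h1, ?_⟩
    have := L.add_mem h2 h
    simpa [sub_add_sub_cancel] using this
  · rintro ⟨h1, h2⟩
    refine ⟨h1, ?_⟩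
    have := L.add_mem h2 (L.neg_mem h)
    simpa [neg_sub, sub_add_sub_cancel] using this

lemma exists_min_fiber {L : AddSubgroup (Fin n → ℤ)}
    {succ : (Fin n → ℤ) → (Fin n → ℤ) → Prop} (hto : IsTermOrder L succ)
    {b x : Fin n → ℤ} (hx : inFiber L b x) :
    ∃ m, IsMinimalFiber L b succ m := by
  obtain ⟨m, hm, hmin⟩ := (hto.wf b).has_min {z | inFiber L b z} ⟨x, hx⟩
  refine ⟨m, hm, fun y hy hne => ?_⟩
  rcases hto.total b y m hy hm hne with h | h
  · exact h
  · exact absurd ⟨hy, hm, h⟩ (hmin y hy)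

lemma min_fiber_unique {L : AddSubgroup (Fin n → ℤ)}
    {succ : (Fin n → ℤ) → (Fin n → ℤ) → Prop} (hto : IsTermOrder L succ)
    {b m m' : Fin n → ℤ} (h : IsMinimalFiber L b succ m)
    (h' : IsMinimalFiber L b succ m') : m = m' := by
  by_contra hne
  exact hto.irrefl m (hto.trans (h'.2 m h.1 hne) (h.2 m' h'.1 (Ne.symm hne)))

lemma succ_chain {L : AddSubgroup (Fin n → ℤ)}
    {succ : (Fin n → ℤ) → (Fin n → ℤ) → Prop} (hto : IsTermOrder L succ)
    {k : ℕ} {p : ℕ → Fin n → ℤ} (hdec : ∀ i < k, succ (p i) (p (i+1))) :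
    ∀ j, 0 < j → j ≤ k → succ (p 0) (p j) := by
  intro j
  induction j with
  | zero => intro h; omega
  | succ j ih =>
    intro _ hjk
    rcases Nat.eq_zero_or_pos j with h0 | h0
    · subst h0; exact hdec 0 (by omega)
    · exact hto.trans (ih h0 (by omega)) (hdec j (by omega))

lemma adjS_symm {S : Set (Fin n → ℤ)} {x y : Fin n → ℤ}
    (h : adjS S x y) : adjS S y x := h.symm

lemma descend_to_min {L : AddSubgroup (Fin n → ℤ)}
    {succ : (Fin n → ℤ) → (Fin n → ℤ) → Prop} (hto : IsTermOrder L succ)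
    {G : Set (Fin n → ℤ)} {b : Fin n → ℤ}
    (hred : ∀ x y, inFiber L b x → inFiber L b y → IsRedPath L G b succ x y)
    {m : Fin n → ℤ} (hm : IsMinimalFiber L b succ m) :
    ∀ x, inFiber L b x → ∃ k p, IsPathIn L G b k p ∧ p 0 = x ∧ p k = m ∧
      ∀ i < k, succ (p i) (p (i+1)) := by
  intro x
  induction x using (hto.wf b).induction with
  | _ x IH =>
  intro hx
  by_cases hxm : x = m
  · exact ⟨0, fun _ => x, ⟨fun i _ => hx, fun i hi => absurd hi (Nat.not_lt_zero i)⟩,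
      rfl, hxm, fun i hi => absurd hi (Nat.not_lt_zero i)⟩
  · have hxsm : succ x m := hm.2 x hx hxm
    obtain ⟨k, p, hp, hp0, hpk, hint⟩ := hred x m hx hm.1
    have hk0 : 0 < k := by
      rcases Nat.eq_zero_or_pos k with h | h
      · exact absurd (by rw [← hp0, ← hpk, h]) hxm
      · exact h
    have hex : ∃ j, 1 ≤ j ∧ p j ≠ x := ⟨k, hk0, by rw [hpk]; exact fun h => hxm h.symm⟩
    set j := Nat.find hex with hj
    obtain ⟨hj1, hjx⟩ : 1 ≤ j ∧ p j ≠ x := Nat.find_spec hex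
    have hjk : j ≤ k := Nat.find_le ⟨hk0, by rw [hpk]; exact fun h => hxm h.symm⟩
    have hprev : p (j - 1) = x := by
      rcases Nat.eq_zero_or_pos (j - 1) with h0 | h0
      · rw [h0, hp0]
      · have := Nat.find_min hex (m := j - 1) (by omega)
        by_contra hne
        exact this ⟨h0, hne⟩
    have hadj : adjS G x (p j) := by
      have := hp.2 (j - 1) (by omega)
      rwa [hprev, Nat.sub_add_cancel hj1] at this
    by_cases hjm : p j = m
    · refine ⟨1, fun i => if i = 0 then x else m, ⟨?_, ?_⟩, by simp, by simp, ?_⟩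
      · intro i hi
        by_cases h0 : i = 0 <;> simp [h0, hx, hm.1]
      · intro i hi
        have : i = 0 := by omega
        subst this
        simpa [← hjm] using hadj
      · intro i hi
        have : i = 0 := by omega
        subst this
        simpa using hxsm
    · have hjfib : inFiber L b (p j) := hp.1 j hjk
      have hjltk : j < k := by
        rcases Nat.lt_or_ge j k with h | h
        · exact h
        · exact absurd (by rw [show j = k by omega, hpk]) hjm
      have hjm' : succ (p j) m := hm.2 (p j) hjfib hjm
      have hnjx : ¬ succ (p j) x := fun h => hint j hj1 hjltk ⟨h, hjm'⟩
      have hxpj : succ x (p j) := by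
        rcases hto.total b x (p j) hx hjfib (Ne.symm hjx) with h | h
        · exact h
        · exact absurd h hnjx
      obtain ⟨k', q, hq, hq0, hqk, hqdec⟩ := IH (p j) ⟨hjfib, hx, hxpj⟩ hjfib
      refine ⟨k' + 1, fun i => if i = 0 then x else q (i - 1), ⟨?_, ?_⟩, by simp, ?_, ?_⟩
      · intro i hi
        by_cases h0 : i = 0
        · simpa [h0] using hx
        · simpa [h0] using hq.1 (i - 1) (by omega)
      · intro i hi
        by_cases h0 : i = 0
        · subst h0
          simpa [hq0] using hadj
        · have h1 : ¬ (i + 1 = 0) := by omega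
          simp only [h0, h1, if_neg]
          have := hq.2 (i - 1) (by omega)
          rw [Nat.sub_add_cancel (by omega)] at this
          simpa using this
      · simp only [Nat.add_sub_cancel]
        rw [if_neg (by omega)]
        simpa using hqk
      · intro i hi
        by_cases h0 : i = 0
        · subst h0
          simpa [hq0] using hxpj
        · have h1 : ¬ (i + 1 = 0) := by omega
          simp only [h0, h1, if_neg]
          have := hqdec (i - 1) (by omega)
          rw [Nat.sub_add_cancel (by omega)] at this
          simpa using this

end AuxStmt1

/-- `G ⊆ L_≻` is a `≻`-Gröbner basis of `L` iff for each `b` and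
each pair `x,y ∈ F_{L,b}` there is a `≻`-reduction path between them. -/
theorem stmt1 {n : ℕ} (L : AddSubgroup (Fin n → ℤ))
    (hL : ∀ u ∈ L, Nonneg u → u = 0)
    (succ : (Fin n → ℤ) → (Fin n → ℤ) → Prop) (hto : IsTermOrder L succ)
    (G : Set (Fin n → ℤ)) (hG : G ⊆ Lpos L succ) :
    IsGroebner L succ G ↔
      ∀ b x y, inFiber L b x → inFiber L b y → IsRedPath L G b succ x y := by
  constructor
  · -- Gröbner ⇒ reduction paths
    intro hg b x y hx hy
    obtain ⟨mx, hmx, kx, p, hp, hp0, hpk, hdecx⟩ := hg x hx.1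
    obtain ⟨my, hmy, ky, q, hq, hq0, hqk, hdecy⟩ := hg y hy.1
    have hmx' : IsMinimalFiber L b succ mx :=
      ⟨(inFiber_congr hx.2 mx).1 hmx.1,
        fun z hz hne => hmx.2 z ((inFiber_congr hx.2 z).2 hz) hne⟩
    have hmy' : IsMinimalFiber L b succ my :=
      ⟨(inFiber_congr hy.2 my).1 hmy.1,
        fun z hz hne => hmy.2 z ((inFiber_congr hy.2 z).2 hz) hne⟩
    have hmm : mx = my := min_fiber_unique hto hmx' hmy'
    set K := kx + ky with hK
    refine ⟨K, fun i => if i ≤ kx then p i else q (K - i), ⟨?_, ?_⟩, ?_, ?_, ?_⟩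
    · -- in fiber
      intro i hi
      by_cases h0 : i ≤ kx
      · simpa [h0] using (inFiber_congr hx.2 (p i)).1 (hp.1 i h0)
      · simp only [h0, if_neg]
        exact (inFiber_congr hy.2 _).1 (hq.1 (K - i) (by omega))
    · -- adjacency
      intro i hi
      by_cases h1 : i + 1 ≤ kx
      · simp only [show i ≤ kx by omega, h1, if_pos]
        exact hp.2 i (by omega)
      · by_cases h0 : i ≤ kx
        · have hik : i = kx := by omega
          have hky : 0 < ky := by omega
          simp only [h0, h1, if_pos, if_neg]
          rw [hik, hpk, hmm, show K - (kx + 1) = ky - 1 by omega]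
          have := hq.2 (ky - 1) (by omega)
          rw [Nat.sub_add_cancel hky, hqk] at this
          exact adjS_symm this
        · simp only [h0, show ¬ (i + 1 ≤ kx) by omega, if_neg]
          have := hq.2 (K - (i + 1)) (by omega)
          rw [show K - (i + 1) + 1 = K - i by omega] at this
          exact adjS_symm this
    · simp [hp0]
    · by_cases h0 : ky = 0
      · have : K ≤ kx := by omega
        simp only [this, if_pos]
        rw [show K = kx by omega, hpk, hmm, ← hqk, h0, hq0]
      · simp only [if_neg (show ¬ K ≤ kx by omega), Nat.sub_self, hq0]
    · -- reduction condition
      intro i hi0 hiK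
      by_cases h0 : i ≤ kx
      · simp only [h0, if_pos]
        have hchain : succ x (p i) := by
          have := succ_chain hto hdecx i hi0 h0
          rwa [hp0] at this
        rintro ⟨h1, -⟩
        exact hto.irrefl x (hto.trans hchain h1)
      · simp only [h0, if_neg]
        have hchain : succ y (q (K - i)) := by
          have := succ_chain hto hdecy (K - i) (by omega) (by omega)
          rwa [hq0] at this
        rintro ⟨-, h2⟩
        exact hto.irrefl y (hto.trans hchain h2)
  · -- reduction paths ⇒ Gröbner
    intro h x hx
    have hxx : inFiber L x x := ⟨hx, by simpa using L.zero_mem⟩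
    obtain ⟨m, hm⟩ := exists_min_fiber hto hxx
    obtain ⟨k, p, hp, hp0, hpk, hdec⟩ :=
      descend_to_min hto (fun a c ha hc => h x a c ha hc) hm x hxx
    exact ⟨m, hm, k, p, hp, hp0, hpk, hdec⟩
end

section
/- Let x, y ∈ F_{L,b} and G ⊆ L_≻ such that x and y are connected in G(F_{L,b}, G). If for every ≻-critical path (x′, z′, y′) in G(F_{L,b}, G) there exists a ≻-reduction path between x′ and y′, then there exists a ≻-reduction path between x and y in G(F_{L,b}, G). -/
open scoped Classical

/-!
Induct on the `≻`-largest node `m` of a walk from `x` to `y` (the term order is well-founded on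
the fiber) and, for fixed `m`, on the number of visits to `m`. If the walk is not a reduction
path, some node lies above both `x` and `y`; then so does `m`, which is therefore an interior
node, and its two neighbours `a`, `c` lie strictly below `m` because `0 ∉ L_≻`. Replacing the
critical path `(a, m, c)` by a reduction path between `a` and `c` only introduces nodes below
`m`, so the number of visits to `m` drops. Once `m` is no longer visited, the largest node of
the walk is strictly below `m`.
-/

namespace List

variable {α : Type*}

theorem IsChain.splice {R : α → α → Prop} {u s v w : List α} (h : (u ++ s ++ v).IsChain R)
    (hw : w.IsChain R) (hh : w.head? = s.head?) (hl : w.getLast? = s.getLast?) :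
    (u ++ w ++ v).IsChain R := by
  rcases s.eq_nil_or_concat with rfl | ⟨s', c, rfl⟩
  · simp_all
  rcases w.eq_nil_or_concat with rfl | ⟨w', c', rfl⟩
  · simp_all
  simp_all [isChain_append]

theorem exists_eq_append_cons_cons_cons {l : List α} {x y m : α} (hm : m ∈ l)
    (hx : l.head? = some x) (hy : l.getLast? = some y) (hmx : m ≠ x) (hmy : m ≠ y) :
    ∃ u a c v, l = u ++ a :: m :: c :: v := by
  obtain ⟨s, t, rfl⟩ := append_of_mem hm
  rcases s.eq_nil_or_concat with rfl | ⟨u, a, rfl⟩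
  · simp_all
  rcases t with _ | ⟨c, v⟩
  · simp_all
  exact ⟨u, a, c, v, by simp⟩

end List

section ReductionPath

variable {ι : Type*} {L : AddSubgroup (ι → ℤ)}
  {succ : (ι → ℤ) → (ι → ℤ) → Prop} {G : Set (ι → ℤ)} {b : ι → ℤ}

theorem IsTermOrder.zero_notMem_Lpos (hto : IsTermOrder L succ) : (0 : ι → ℤ) ∉ Lpos L succ := by
  intro h
  have h0 : vposPart (0 : ι → ℤ) = vnegPart 0 := by funext i; simp [vposPart, vnegPart]
  exact hto.irrefl _ (h0 ▸ h.2)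

theorem IsTermOrder.ne_of_adjS (hto : IsTermOrder L succ) (hG : G ⊆ Lpos L succ)
    {p q : ι → ℤ} (h : adjS G p q) : p ≠ q := by
  rintro rfl
  exact hto.zero_notMem_Lpos (hG (by rcases h with h | h <;> simpa using h))

theorem IsTermOrder.succ_of_not_succ (hto : IsTermOrder L succ) {m a q : ι → ℤ}
    (hq : inFiber L b q) (ha : inFiber L b a) (hqa : ¬ succ q a) (hma : succ m a) :
    succ m q := by
  by_cases h : q = a
  · exact h ▸ hma
  · exact hto.trans hma ((hto.total b q a hq ha h).resolve_left hqa)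

theorem IsTermOrder.exists_max (hto : IsTermOrder L succ) {l : List (ι → ℤ)} (hne : l ≠ [])
    (hfib : ∀ q ∈ l, inFiber L b q) : ∃ m ∈ l, ∀ q ∈ l, q = m ∨ succ m q := by
  let r : {q // q ∈ l} → {q // q ∈ l} → Prop := fun p q => succ p.1 q.1
  have : IsTrans _ r := ⟨fun _ _ _ => hto.trans⟩
  have : Std.Irrefl r := ⟨fun p => hto.irrefl p.1⟩
  obtain ⟨⟨m, hm⟩, -, hmax⟩ := (Finite.wellFounded_of_trans_of_irrefl r).has_min Set.univ
    ⟨⟨_, List.head_mem hne⟩, trivial⟩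
  refine ⟨m, hm, fun q hq => or_iff_not_imp_left.2 fun hqm => ?_⟩
  exact (hto.total b q m (hfib q hq) (hfib m hm) hqm).resolve_left (hmax ⟨q, hq⟩ trivial)

def IsFiberWalk (L : AddSubgroup (ι → ℤ)) (G : Set (ι → ℤ)) (b x y : ι → ℤ)
    (l : List (ι → ℤ)) : Prop :=
  l.head? = some x ∧ l.getLast? = some y ∧ l.IsChain (adjS G) ∧ ∀ q ∈ l, inFiber L b q

theorem IsPathIn.isFiberWalk {k : ℕ} {p : ℕ → ι → ℤ} (h : IsPathIn L G b k p) :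
    IsFiberWalk L G b (p 0) (p k) ((List.range (k + 1)).map p) := by
  refine ⟨by simp [List.range_succ_eq_map], by simp [List.range_succ], ?_, ?_⟩
  · rw [List.isChain_map, List.isChain_range_succ]
    exact h.2
  · simp only [List.mem_map, List.mem_range, forall_exists_index, and_imp]
    rintro _ i hi rfl
    exact h.1 i (Nat.lt_succ_iff.mp hi)

theorem IsFiberWalk.isRedPath {x y : ι → ℤ} {l : List (ι → ℤ)} (hw : IsFiberWalk L G b x y l)
    (h : ∀ q ∈ l, ¬ (succ q x ∧ succ q y)) : IsRedPath L G b succ x y := by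
  obtain ⟨hx, hy, hchain, hfib⟩ := hw
  have hne : l ≠ [] := by rintro rfl; simp at hx
  have hlen : 0 < l.length := List.length_pos_iff.2 hne
  have hget : ∀ i (hi : i < l.length), l.getD i 0 = l[i] := fun i hi => List.getD_eq_getElem _ _ hi
  refine ⟨l.length - 1, fun i => l.getD i 0, ⟨fun i hi => ?_, fun i hi => ?_⟩, ?_, ?_,
    fun i _ hi => ?_⟩ <;> dsimp only
  · rw [hget i (by omega)]; exact hfib _ (List.getElem_mem _)
  · rw [hget i (by omega), hget (i + 1) (by omega)]; exact hchain.getElem i (by omega)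
  · rw [hget 0 hlen, ← List.head_eq_getElem_zero hne]
    simpa [List.head?_eq_some_head hne] using hx
  · rw [hget _ (by omega), ← List.getLast_eq_getElem hne]
    simpa [List.getLast?_eq_some_getLast hne] using hy
  · rw [hget i (by omega)]; exact h _ (List.getElem_mem _)

theorem IsRedPath.exists_isFiberWalk_lt (hto : IsTermOrder L succ) {a c m : ι → ℤ}
    (hr : IsRedPath L G b succ a c) (hma : succ m a) (hmc : succ m c) :
    ∃ w, IsFiberWalk L G b a c w ∧ ∀ q ∈ w, succ m q := by
  obtain ⟨k, p, hp, rfl, rfl, hint⟩ := hr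
  refine ⟨_, hp.isFiberWalk, ?_⟩
  simp only [List.mem_map, List.mem_range, forall_exists_index, and_imp]
  rintro _ i hi rfl
  rcases Nat.eq_zero_or_pos i with rfl | hi0
  · exact hma
  rcases (Nat.lt_succ_iff.mp hi).eq_or_lt with rfl | hik
  · exact hmc
  rcases not_and_or.1 (hint i hi0 hik) with h | h
  · exact hto.succ_of_not_succ (hp.1 i hik.le) (hp.1 0 k.zero_le) h hma
  · exact hto.succ_of_not_succ (hp.1 i hik.le) (hp.1 k le_rfl) h hmc

theorem IsFiberWalk.splice {x y a c : ι → ℤ} {u s v w : List (ι → ℤ)}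
    (hl : IsFiberWalk L G b x y (u ++ s ++ v)) (hw : IsFiberWalk L G b a c w)
    (hs : s.head? = some a) (hs' : s.getLast? = some c) :
    IsFiberWalk L G b x y (u ++ w ++ v) := by
  obtain ⟨hx, hy, hchain, hfib⟩ := hl
  obtain ⟨ha, hc, hchain', hfib'⟩ := hw
  refine ⟨?_, ?_, hchain.splice hchain' (ha.trans hs.symm) (hc.trans hs'.symm), ?_⟩
  · simpa [List.head?_append, ha, hs] using hx
  · simpa [List.getLast?_append, hc, hs'] using hy
  · simp only [List.mem_append] at hfib ⊢
    rintro q ((hq | hq) | hq)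
    exacts [hfib q (.inl (.inl hq)), hfib' q hq, hfib q (.inr hq)]

theorem IsFiberWalk.exists_count_lt (hto : IsTermOrder L succ) (hG : G ⊆ Lpos L succ)
    (hcrit : ∀ x' z' y', IsCriticalIn L G b succ x' z' y' → IsRedPath L G b succ x' y')
    {x y m : ι → ℤ} {l : List (ι → ℤ)} (hw : IsFiberWalk L G b x y l) (hm : m ∈ l)
    (hle : ∀ q ∈ l, q = m ∨ succ m q) (hmx : m ≠ x) (hmy : m ≠ y) :
    ∃ l', IsFiberWalk L G b x y l' ∧ (∀ q ∈ l', q = m ∨ succ m q) ∧ l'.count m < l.count m := by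
  obtain ⟨u, a, c, v, rfl⟩ := List.exists_eq_append_cons_cons_cons hm hw.1 hw.2.1 hmx hmy
  have hw' : IsFiberWalk L G b x y (u ++ [a, m, c] ++ v) := by simpa using hw
  have hfib : ∀ q ∈ [a, m, c], inFiber L b q := fun q hq =>
    hw'.2.2.2 q (List.mem_append_left _ (List.mem_append_right _ hq))
  obtain ⟨ham, hmc, -⟩ : adjS G a m ∧ adjS G m c ∧ _ := by
    simpa [List.isChain_cons_cons] using (List.isChain_append.1 hw.2.2.1).2.1
  have hsa : succ m a := (hle a (by simp)).resolve_left (hto.ne_of_adjS hG ham)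
  have hsc : succ m c := (hle c (by simp)).resolve_left (hto.ne_of_adjS hG hmc).symm
  obtain ⟨w, hwc, hlt⟩ := (hcrit a m c ⟨hfib a (by simp), hfib m (by simp), hfib c (by simp),
    ham, hmc, hsa, hsc⟩).exists_isFiberWalk_lt hto hsa hsc
  refine ⟨u ++ w ++ v, hw'.splice hwc rfl rfl, ?_, ?_⟩
  · simp only [List.mem_append] at hle ⊢
    rintro q ((hq | hq) | hq)
    exacts [hle q (.inl hq), .inr (hlt q hq), hle q (.inr (by simp [hq]))]
  · have hw0 : w.count m = 0 := List.count_eq_zero.2 fun h => hto.irrefl _ (hlt m h)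
    simp only [List.count_append, hw0, List.count_cons, beq_iff_eq, if_true]
    omega

theorem IsFiberWalk.isRedPath_of_forall_le (hto : IsTermOrder L succ) (hG : G ⊆ Lpos L succ)
    (hcrit : ∀ x' z' y', IsCriticalIn L G b succ x' z' y' → IsRedPath L G b succ x' y')
    {x y m : ι → ℤ} {l : List (ι → ℤ)} (hw : IsFiberWalk L G b x y l) (hm : inFiber L b m)
    (hle : ∀ q ∈ l, q = m ∨ succ m q) : IsRedPath L G b succ x y := by
  induction m using (hto.wf b).induction generalizing x y l with
  | _ m ihm => ?_
  induction hc : l.count m using Nat.strong_induction_on generalizing x y l with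
  | _ c ihc => ?_
  by_cases hred : ∀ q ∈ l, ¬ (succ q x ∧ succ q y)
  · exact hw.isRedPath hred
  push Not at hred
  obtain ⟨q, hq, hqx, hqy⟩ := hred
  by_cases hml : m ∈ l
  · have hmx : succ m x := (hle q hq).elim (· ▸ hqx) (hto.trans · hqx)
    have hmy : succ m y := (hle q hq).elim (· ▸ hqy) (hto.trans · hqy)
    obtain ⟨l', hw', hle', hlt⟩ := hw.exists_count_lt hto hG hcrit hml hle
      (fun h => hto.irrefl m (h ▸ hmx)) (fun h => hto.irrefl m (h ▸ hmy))
    exact ihc _ (hc ▸ hlt) hw' hle' rfl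
  · obtain ⟨m₀, hm₀, hle₀⟩ := hto.exists_max (List.ne_nil_of_mem hq) hw.2.2.2
    have hmm₀ : succ m m₀ := (hle m₀ hm₀).resolve_left (ne_of_mem_of_not_mem hm₀ hml)
    exact ihm m₀ ⟨hw.2.2.2 m₀ hm₀, hm, hmm₀⟩ hw (hw.2.2.2 m₀ hm₀) hle₀

end ReductionPath

theorem stmt2_general {n : ℕ} (L : AddSubgroup (Fin n → ℤ))
    (succ : (Fin n → ℤ) → (Fin n → ℤ) → Prop) (hto : IsTermOrder L succ)
    (G : Set (Fin n → ℤ)) (hG : G ⊆ Lpos L succ)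
    (b x y : Fin n → ℤ)
    (hconn : ConnIn L G b x y)
    (hcrit : ∀ x' z' y', IsCriticalIn L G b succ x' z' y' →
      IsRedPath L G b succ x' y') :
    IsRedPath L G b succ x y := by
  obtain ⟨k, p, hp, rfl, rfl⟩ := hconn
  have hw := hp.isFiberWalk
  obtain ⟨m, hm, hle⟩ := hto.exists_max (by simp) hw.2.2.2
  exact hw.isRedPath_of_forall_le hto hG hcrit (hw.2.2.2 m hm) hle

/-- if `x` and `y` are connected in `G(F_{L,b},G)` and every
`≻`-critical path in `G(F_{L,b},G)` admits a `≻`-reduction path between its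
endpoints, then there is a `≻`-reduction path between `x` and `y`. -/
theorem stmt2 {n : ℕ} (L : AddSubgroup (Fin n → ℤ))
    (hL : ∀ u ∈ L, Nonneg u → u = 0)
    (succ : (Fin n → ℤ) → (Fin n → ℤ) → Prop) (hto : IsTermOrder L succ)
    (G : Set (Fin n → ℤ)) (hG : G ⊆ Lpos L succ)
    (b x y : Fin n → ℤ) (hx : inFiber L b x) (hy : inFiber L b y)
    (hconn : ConnIn L G b x y)
    (hcrit : ∀ x' z' y', IsCriticalIn L G b succ x' z' y' →
      IsRedPath L G b succ x' y') :
    IsRedPath L G b succ x y :=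
  stmt2_general L succ hto G hG b x y hconn hcrit
end

section
/- Let S, T ⊆ L and i ∈ {1,…,n}. Then T is {i}-saturated on S if and only if for all b ∈ ℤ^n and all x, y ∈ F_{L,b} that are connected in G(F_{L,b}, S), there exists an ē^i-reduction path from x to y in G(F_{L,b}, T), where ē^i = −e^i. -/
open scoped Classical

noncomputable section

variable {ι : Type*} [Fintype ι]

lemma qdot_ebar {n : ℕ} (i : Fin n) (x : Fin n → ℤ) :
    qdot (ebar i) x = -(x i : ℚ) := by
  simp [qdot, ebar, ite_mul, Finset.sum_ite_eq']

lemma qdot_ebar_lt {n : ℕ} (i : Fin n) (x z : Fin n → ℤ) :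
    qdot (ebar i) x < qdot (ebar i) z ↔ z i < x i := by
  rw [qdot_ebar, qdot_ebar, neg_lt_neg_iff, Int.cast_lt]

lemma meetOn_singleton {n : ℕ} (i : Fin n) (x y : Fin n → ℤ) (j : Fin n) :
    meetOn {i} x y j = if j = i then min (x j) (y j) else 0 := by
  simp [meetOn, Set.mem_singleton_iff]

end

/-- `T` is `{i}`-saturated on `S` iff for all `b` and all
`x,y ∈ F_{L,b}` connected in `G(F_{L,b},S)` there is an `ē^i`-reduction path
from `x` to `y` in `G(F_{L,b},T)`. -/
theorem stmt7 {n : ℕ} (L : AddSubgroup (Fin n → ℤ))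
    (hL : ∀ u ∈ L, Nonneg u → u = 0)
    (S T : Set (Fin n → ℤ)) (hS : ∀ s ∈ S, s ∈ L) (hT : ∀ s ∈ T, s ∈ L)
    (i : Fin n) :
    IsSaturatedOn L {i} S T ↔
      ∀ b x y, inFiber L b x → inFiber L b y → ConnIn L S b x y →
        IsPhiRedPath L T b (ebar i) x y := by
  constructor
  · intro hsat b x y hx hy hconn
    obtain ⟨k, q, ⟨hqf, hqa⟩, hq0, hqk⟩ := hsat b x y hx hy hconn
    set γ := meetOn {i} x y with hγ
    have hγnn : Nonneg γ := by
      intro j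
      rw [hγ, meetOn_singleton]
      split
      · exact le_min (hx.1 j) (hy.1 j)
      · exact le_refl 0
    have hγi : γ i = min (x i) (y i) := by rw [hγ, meetOn_singleton]; simp
    refine ⟨k, fun j => q j + γ, ⟨?_, ?_⟩, ?_, ?_, ?_⟩
    · intro j hj
      obtain ⟨hnn, hmem⟩ := hqf j hj
      refine ⟨fun l => by have := hnn l; have := hγnn l; show (0:ℤ) ≤ q j l + γ l; linarith, ?_⟩
      have : q j + γ - b = q j - (b - γ) := by ring
      rw [this]; exact hmem
    · intro j hj
      have := hqa j hj
      have h1 : q j + γ - (q (j+1) + γ) = q j - q (j+1) := by ring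
      have h2 : q (j+1) + γ - (q j + γ) = q (j+1) - q j := by ring
      rcases this with h | h
      · exact Or.inl (h1 ▸ h)
      · exact Or.inr (h2 ▸ h)
    · show q 0 + γ = x; rw [hq0]; ring
    · show q k + γ = y; rw [hqk]; ring
    · intro j hj0 hjk hcon
      obtain ⟨h1, h2⟩ := hcon
      rw [qdot_ebar_lt] at h1 h2
      simp only at h1 h2
      have hnn : 0 ≤ q j i := (hqf j (le_of_lt hjk)).1 i
      have h3 : q j i + γ i < min (x i) (y i) := lt_min h1 h2
      rw [hγi] at h3; omega
  · intro h b x y hx hy hconn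
    obtain ⟨k, p, ⟨hpf, hpa⟩, hp0, hpk, hred⟩ := h b x y hx hy hconn
    set γ := meetOn {i} x y with hγ
    have hγi : γ i = min (x i) (y i) := by rw [hγ, meetOn_singleton]; simp
    have hγj : ∀ j, j ≠ i → γ j = 0 := by
      intro j hj; rw [hγ, meetOn_singleton]; simp [hj]
    have key : ∀ j ≤ k, γ i ≤ p j i := by
      intro j hj
      rcases Nat.eq_zero_or_pos j with rfl | hj0
      · rw [hp0, hγi]; exact min_le_left _ _
      rcases eq_or_lt_of_le hj with rfl | hjk
      · rw [hpk, hγi]; exact min_le_right _ _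
      · have := hred j hj0 hjk
        rw [qdot_ebar_lt, qdot_ebar_lt] at this
        rw [hγi]
        by_contra hc
        exact this ⟨by omega, by omega⟩
    refine ⟨k, fun j => p j - γ, ⟨?_, ?_⟩, ?_, ?_⟩
    · intro j hj
      obtain ⟨hnn, hmem⟩ := hpf j hj
      refine ⟨?_, ?_⟩
      · intro l
        by_cases hl : l = i
        · subst hl; have := key j hj; simp only [Pi.sub_apply]; omega
        · have := hnn l; simp only [Pi.sub_apply, hγj l hl]; omega
      · have : p j - γ - (b - γ) = p j - b := by ring
        rw [this]; exact hmem
    · intro j hj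
      have := hpa j hj
      have h1 : p j - γ - (p (j+1) - γ) = p j - p (j+1) := by ring
      have h2 : p (j+1) - γ - (p j - γ) = p (j+1) - p j := by ring
      rcases this with h | h
      · exact Or.inl (h1 ▸ h)
      · exact Or.inr (h2 ▸ h)
    · show p 0 - γ = x - γ; rw [hp0]
    · show p k - γ = y - γ; rw [hpk]
end

section
/- If U is σ-saturated on S and T is τ-saturated on U, then T is (σ ∪ τ)-saturated on S. -/
open scoped Classical

lemma meet_union_aux {ι : Type*} (σ τ : Set ι) (x y : ι → ℤ) :
    meetOn (σ ∪ τ) x y =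
      meetOn σ x y + meetOn τ (x - meetOn σ x y) (y - meetOn σ x y) := by
  funext i
  simp only [meetOn, Pi.add_apply, Pi.sub_apply, Set.mem_union]
  by_cases hσ : i ∈ σ <;> by_cases hτ : i ∈ τ <;> simp [hσ, hτ] <;> omega

lemma sub_meet_inFiber {ι : Type*} [Fintype ι] {L : AddSubgroup (ι → ℤ)}
    {σ : Set ι} {b x y : ι → ℤ} (hx : inFiber L b x) (hy : Nonneg y) :
    inFiber L (b - meetOn σ x y) (x - meetOn σ x y) := by
  refine ⟨fun i => ?_, ?_⟩
  · simp only [Pi.sub_apply, meetOn]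
    have := hx.1 i
    have := hy i
    split_ifs <;> omega
  · have h := hx.2
    have : x - meetOn σ x y - (b - meetOn σ x y) = x - b := by abel
    rw [this]; exact h

/-- if `U` is `σ`-saturated on `S` and `T` is `τ`-saturated on
`U`, then `T` is `(σ ∪ τ)`-saturated on `S`. -/
theorem stmt8 {n : ℕ} (L : AddSubgroup (Fin n → ℤ))
    (σ τ : Set (Fin n)) (S T U : Set (Fin n → ℤ))
    (hS : ∀ s ∈ S, s ∈ L) (hT : ∀ s ∈ T, s ∈ L) (hU : ∀ s ∈ U, s ∈ L)
    (h1 : IsSaturatedOn L σ S U) (h2 : IsSaturatedOn L τ U T) :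
    IsSaturatedOn L (σ ∪ τ) S T := by
  intro b x y hx hy hconn
  set γ₁ := meetOn σ x y with hγ₁
  have hc1 := h1 b x y hx hy hconn
  have hx1 : inFiber L (b - γ₁) (x - γ₁) := sub_meet_inFiber hx hy.1
  have hy1 : inFiber L (b - γ₁) (y - γ₁) := by
    have h : meetOn σ y x = γ₁ := by
      funext i; simp [meetOn, hγ₁, min_comm]
    have := sub_meet_inFiber (σ := σ) hy hx.1
    rwa [h] at this
  have hc2 := h2 (b - γ₁) (x - γ₁) (y - γ₁) hx1 hy1 hc1
  have hkey := meet_union_aux σ τ x y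
  rw [show b - meetOn (σ ∪ τ) x y = b - γ₁ - meetOn τ (x - γ₁) (y - γ₁) by rw [hkey]; abel,
      show x - meetOn (σ ∪ τ) x y = x - γ₁ - meetOn τ (x - γ₁) (y - γ₁) by rw [hkey]; abel,
      show y - meetOn (σ ∪ τ) x y = y - γ₁ - meetOn τ (x - γ₁) (y - γ₁) by rw [hkey]; abel]
  exact hc2
end

section
/- Let T be σ-saturated on S, and let u ∈ S with supp(u⁻) ⊆ σ or supp(u⁺) ⊆ σ. Then T is (supp(u) ∪ σ)-saturated on S. -/
open scoped Classical

/-! Assume `supp u⁻ ⊆ σ` (otherwise replace `u` by `-u`). Then `γ = x ∧_{supp u ∪ σ} y` splits as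
`x ∧_σ y + μ` with `μ = x ∧_{supp u \ σ} y` living where `u⁺ ≥ 1`, so `μ ≤ M u⁺` for large `M`.
Walking `M` steps along `u` shows that `x - μ + M u⁻` and `y - μ + M u⁻` are still connected by
`S`. As `M u⁻` lives on `σ` and `μ` off `σ`, their `σ`-meet is `x ∧_σ y + M u⁻`, so `σ`-saturation
applied to them leaves exactly `x - γ` and `y - γ`. -/

section Saturation

variable {ι : Type*} {L : AddSubgroup (ι → ℤ)} {S : Set (ι → ℤ)}

lemma vnegPart_add_self (u : ι → ℤ) : vnegPart u + u = vposPart u := by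
  funext i
  simp only [vposPart, vnegPart, Pi.add_apply]
  omega

lemma vposPart_nonneg (u : ι → ℤ) : Nonneg (vposPart u) := fun _ => le_max_right _ _

lemma vnegPart_nonneg (u : ι → ℤ) : Nonneg (vnegPart u) := fun _ => le_max_right _ _

lemma vnegPart_neg (u : ι → ℤ) : vnegPart (-u) = vposPart u := by
  funext i
  simp [vnegPart, vposPart]

lemma suppV_neg (u : ι → ℤ) : suppV (-u) = suppV u := by
  ext i
  simp [suppV]

lemma suppV_sdiff_subset_suppV_vposPart {u : ι → ℤ} {σ : Set ι}
    (hneg : suppV (vnegPart u) ⊆ σ) : suppV u \ σ ⊆ suppV (vposPart u) := by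
  rintro i ⟨hu, hiσ⟩
  have hui : max (-u i) 0 = 0 := by_contra fun h => hiσ (hneg h)
  simp only [suppV, vposPart, Set.mem_ofPred_eq] at hu ⊢
  omega

lemma exists_le_nsmul_of_suppV_subset [Fintype ι] {μ w : ι → ℤ} (hw : Nonneg w)
    (h : suppV μ ⊆ suppV w) : ∃ M : ℕ, μ ≤ M • w := by
  refine ⟨∑ j, (μ j).toNat, fun i => ?_⟩
  rw [Pi.smul_apply, nsmul_eq_mul]
  by_cases hμi : μ i = 0
  · rw [hμi]
    exact mul_nonneg (Nat.cast_nonneg _) (hw i)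
  have hwi : 1 ≤ w i := lt_of_le_of_ne (hw i) (Ne.symm (h hμi))
  have hle : (μ i).toNat ≤ ∑ j, (μ j).toNat :=
    Finset.single_le_sum (f := fun j => (μ j).toNat) (fun j _ => Nat.zero_le _) (Finset.mem_univ i)
  have hM : μ i ≤ ((∑ j, (μ j).toNat : ℕ) : ℤ) := (Int.self_le_toNat _).trans (by exact_mod_cast hle)
  nlinarith [Nat.cast_nonneg (α := ℤ) (∑ j, (μ j).toNat)]

lemma suppV_meetOn_subset (σ : Set ι) (x y : ι → ℤ) : suppV (meetOn σ x y) ⊆ σ := by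
  intro i hi
  by_contra hiσ
  exact hi (if_neg hiσ)

lemma meetOn_le_left {x : ι → ℤ} (hx : Nonneg x) (σ : Set ι) (y : ι → ℤ) :
    meetOn σ x y ≤ x := by
  intro i
  unfold meetOn
  split_ifs
  exacts [min_le_left _ _, hx i]

lemma meetOn_le_right {y : ι → ℤ} (hy : Nonneg y) (σ : Set ι) (x : ι → ℤ) :
    meetOn σ x y ≤ y := by
  intro i
  unfold meetOn
  split_ifs
  exacts [min_le_right _ _, hy i]

lemma meetOn_union {σ τ : Set ι} (h : Disjoint σ τ) (x y : ι → ℤ) :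
    meetOn (σ ∪ τ) x y = meetOn σ x y + meetOn τ x y := by
  funext i
  by_cases hσ : i ∈ σ
  · simp [meetOn, hσ, Set.disjoint_left.1 h hσ]
  · by_cases hτ : i ∈ τ <;> simp [meetOn, hσ, hτ]

lemma meetOn_sub_add {σ : Set ι} {μ v : ι → ℤ} (hμ : ∀ i ∈ σ, μ i = 0)
    (hv : ∀ i ∉ σ, v i = 0) (x y : ι → ℤ) :
    meetOn σ (x - μ + v) (y - μ + v) = meetOn σ x y + v := by
  funext i
  by_cases hi : i ∈ σ
  · simp [meetOn, hi, hμ i hi, min_add_add_right]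
  · simp [meetOn, hi, hv i hi]

lemma adjS_comm {x y : ι → ℤ} : adjS S x y ↔ adjS S y x := Or.comm

lemma adjS_add {u : ι → ℤ} (hu : u ∈ S ∨ -u ∈ S) (x : ι → ℤ) : adjS S x (x + u) := by
  unfold adjS
  rw [sub_add_cancel_left, add_sub_cancel_left]
  exact hu.symm

namespace ConnIn

variable {b x y z : ι → ℤ}

lemma inFiber_left (h : ConnIn L S b x y) : inFiber L b x := by
  obtain ⟨k, p, ⟨hmem, -⟩, rfl, -⟩ := h
  exact hmem 0 k.zero_le

lemma inFiber_right (h : ConnIn L S b x y) : inFiber L b y := by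
  obtain ⟨k, p, ⟨hmem, -⟩, -, rfl⟩ := h
  exact hmem k le_rfl

lemma symm (h : ConnIn L S b x y) : ConnIn L S b y x := by
  obtain ⟨k, p, ⟨hmem, hadj⟩, rfl, rfl⟩ := h
  refine ⟨k, fun t => p (k - t), ⟨fun i _ => hmem _ (Nat.sub_le _ _), fun i hi => ?_⟩,
    by simp, by simp⟩
  have h := hadj (k - (i + 1)) (by omega)
  rw [show k - (i + 1) + 1 = k - i by omega] at h
  exact adjS_comm.1 h

lemma trans (h₁ : ConnIn L S b x y) (h₂ : ConnIn L S b y z) : ConnIn L S b x z := by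
  obtain ⟨k, p, ⟨hmem, hadj⟩, rfl, rfl⟩ := h₁
  obtain ⟨l, q, ⟨hmem', hadj'⟩, hq0, rfl⟩ := h₂
  have hjoin : ∀ t, k ≤ t → (if t ≤ k then p t else q (t - k)) = q (t - k) := by
    intro t ht
    split_ifs with h
    · rw [le_antisymm h ht, Nat.sub_self, hq0]
    · rfl
  refine ⟨k + l, fun t => if t ≤ k then p t else q (t - k), ⟨fun i hi => ?_, fun i hi => ?_⟩,
    by simp, ?_⟩
  · by_cases h : i ≤ k
    · simpa [h] using hmem i h
    · simpa [h] using hmem' (i - k) (by omega)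
  · by_cases h : i < k
    · simpa [h.le, Nat.succ_le_of_lt h] using hadj i h
    · simp only [hjoin i (by omega), hjoin (i + 1) (by omega)]
      rw [show i + 1 - k = i - k + 1 by omega]
      exact hadj' (i - k) (by omega)
  · show (if k + l ≤ k then p (k + l) else q (k + l - k)) = q l
    rw [hjoin (k + l) (Nat.le_add_right k l), Nat.add_sub_cancel_left]

lemma of_sub_mem {b₁ b₂ : ι → ℤ} (hb : b₁ - b₂ ∈ L) (h : ConnIn L S b₁ x y) :
    ConnIn L S b₂ x y := by
  obtain ⟨k, p, ⟨hmem, hadj⟩, h0, hk⟩ := h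
  refine ⟨k, p, ⟨fun i hi => ⟨(hmem i hi).1, ?_⟩, hadj⟩, h0, hk⟩
  simpa using L.add_mem (hmem i hi).2 hb

lemma add_right (h : ConnIn L S b x y) {c : ι → ℤ} (hc : Nonneg c) :
    ConnIn L S (b + c) (x + c) (y + c) := by
  obtain ⟨k, p, ⟨hmem, hadj⟩, rfl, rfl⟩ := h
  refine ⟨k, fun t => p t + c, ⟨fun i hi => ⟨fun j => ?_, ?_⟩, fun i hi => ?_⟩, rfl, rfl⟩
  · exact add_nonneg ((hmem i hi).1 j) (hc j)
  · simpa using (hmem i hi).2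
  · simpa [adjS] using hadj i hi

end ConnIn

/-- The ladder `w + M u⁻, w + M u⁻ + u, …, w + M u⁻ + M u = w + M u⁺` stays in `ℕ^n` because its
`t`-th rung is `w + (M - t) u⁻ + t u⁺`. -/
lemma connIn_vnegPart_vposPart {u : ι → ℤ} (hu : u ∈ S ∨ -u ∈ S) (huL : u ∈ L)
    {b w : ι → ℤ} (hw : Nonneg w) (M : ℕ) (hb : w + M • vnegPart u - b ∈ L) :
    ConnIn L S b (w + M • vnegPart u) (w + M • vposPart u) := by
  refine ⟨M, fun t => w + M • vnegPart u + t • u, ⟨fun t ht => ⟨fun i => ?_, ?_⟩, fun t _ => ?_⟩,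
    by simp, ?_⟩
  · have hrung : 0 ≤ ((M : ℤ) - t) * vnegPart u i + t * vposPart u i :=
      add_nonneg (mul_nonneg (by omega) (vnegPart_nonneg u i))
        (mul_nonneg (Nat.cast_nonneg _) (vposPart_nonneg u i))
    have hpos : (t : ℤ) * vposPart u i = t * vnegPart u i + t * u i := by
      rw [← vnegPart_add_self u, Pi.add_apply, mul_add]
    show 0 ≤ w i + M • vnegPart u i + t • u i
    simp only [nsmul_eq_mul]
    linarith [hw i]
  · rw [add_sub_right_comm]
    exact L.add_mem hb (L.nsmul_mem huL t)
  · simpa [add_smul, add_assoc] using adjS_add hu (w + M • vnegPart u + t • u)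
  · simp only [add_assoc, ← smul_add, vnegPart_add_self]

/-- Push `x, y` down by `μ` and up by `M u⁻`: climb from `x - μ + M u⁻` by `M` steps of `u` to
`x + c` with `c = M u⁺ - μ ≥ 0`, follow the translate by `c` of the path from `x` to `y`, and
descend from `y + c` in the same way. -/
lemma ConnIn.sub_add_nsmul_vnegPart {b x y μ u : ι → ℤ} {M : ℕ} (hu : u ∈ S ∨ -u ∈ S)
    (huL : u ∈ L) (hxy : ConnIn L S b x y) (hμx : μ ≤ x) (hμy : μ ≤ y)
    (hμM : μ ≤ M • vposPart u) :
    ConnIn L S (x - μ + M • vnegPart u) (x - μ + M • vnegPart u) (y - μ + M • vnegPart u) := by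
  have hx := hxy.inFiber_left
  have hyx : y - μ + M • vnegPart u - (x - μ + M • vnegPart u) ∈ L := by
    simpa using L.sub_mem hxy.inFiber_right.2 hx.2
  have hup := connIn_vnegPart_vposPart hu huL (fun i => sub_nonneg.2 (hμx i)) M
    (by rw [sub_self]; exact L.zero_mem)
  have hdown := connIn_vnegPart_vposPart hu huL (fun i => sub_nonneg.2 (hμy i)) M hyx
  have hmid : ConnIn L S (x - μ + M • vnegPart u)
      (x - μ + M • vposPart u) (y - μ + M • vposPart u) := by
    have hc : Nonneg (M • vposPart u - μ) := fun i => sub_nonneg.2 (hμM i)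
    have hb : b + (M • vposPart u - μ) - (x - μ + M • vnegPart u) = M • u - (x - b) := by
      rw [← vnegPart_add_self u, smul_add]
      abel
    convert (hxy.add_right hc).of_sub_mem (hb ▸ L.sub_mem (L.nsmul_mem huL M) hx.2) using 1
      <;> abel
  exact hup.trans (hmid.trans hdown.symm)

theorem IsSaturatedOn.union_suppV_of_suppV_vnegPart_subset {σ : Set ι} {T : Set (ι → ℤ)}
    [Fintype ι] (hsat : IsSaturatedOn L σ S T) {u : ι → ℤ} (hu : u ∈ S ∨ -u ∈ S) (huL : u ∈ L)
    (hneg : suppV (vnegPart u) ⊆ σ) : IsSaturatedOn L (suppV u ∪ σ) S T := by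
  intro b x y hx hy hxy
  set μ := meetOn (suppV u \ σ) x y
  obtain ⟨M, hM⟩ := exists_le_nsmul_of_suppV_subset (vposPart_nonneg u)
    ((suppV_meetOn_subset _ x y).trans (suppV_sdiff_subset_suppV_vposPart hneg))
  have hAB := hxy.sub_add_nsmul_vnegPart hu huL (meetOn_le_left hx.1 _ y)
    (meetOn_le_right hy.1 _ x) hM
  have hT := hsat _ _ _ hAB.inFiber_left hAB.inFiber_right hAB
  have hγ : meetOn (suppV u ∪ σ) x y = meetOn σ x y + μ := by
    rw [Set.union_comm, ← Set.union_sdiff_self, meetOn_union Set.disjoint_sdiff_right]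
  have hmeet : meetOn σ (x - μ + M • vnegPart u) (y - μ + M • vnegPart u)
      = meetOn σ x y + M • vnegPart u := by
    refine meetOn_sub_add (fun i hi => ?_) (fun i hi => ?_) x y
    · by_contra h
      exact (suppV_meetOn_subset (suppV u \ σ) x y h).2 hi
    · have : vnegPart u i = 0 := by_contra fun h => hi (hneg h)
      simp [this]
  have hxγ : x - meetOn (suppV u ∪ σ) x y = x - μ + M • vnegPart u
      - meetOn σ (x - μ + M • vnegPart u) (y - μ + M • vnegPart u) := by
    rw [hγ, hmeet]
    abel
  have hyγ : y - meetOn (suppV u ∪ σ) x y = y - μ + M • vnegPart u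
      - meetOn σ (x - μ + M • vnegPart u) (y - μ + M • vnegPart u) := by
    rw [hγ, hmeet]
    abel
  rw [hxγ, hyγ]
  exact hT.of_sub_mem (by rw [← hxγ, sub_sub_sub_cancel_right]; exact hx.2)

end Saturation

theorem stmt9_general {n : ℕ} (L : AddSubgroup (Fin n → ℤ))
    (σ : Set (Fin n)) (S T : Set (Fin n → ℤ))
    (hS : ∀ s ∈ S, s ∈ L)
    (hsat : IsSaturatedOn L σ S T)
    (u : Fin n → ℤ) (hu : u ∈ S)
    (hsupp : suppV (vnegPart u) ⊆ σ ∨ suppV (vposPart u) ⊆ σ) :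
    IsSaturatedOn L (suppV u ∪ σ) S T := by
  rcases hsupp with hneg | hpos
  · exact hsat.union_suppV_of_suppV_vnegPart_subset (Or.inl hu) (hS u hu) hneg
  · have h := hsat.union_suppV_of_suppV_vnegPart_subset (u := -u) (Or.inr (by rwa [neg_neg]))
      (neg_mem (hS u hu)) (by rwa [vnegPart_neg])
    rwa [suppV_neg] at h

/-- if `T` is `σ`-saturated on `S` and `u ∈ S` has
`supp(u⁻) ⊆ σ` or `supp(u⁺) ⊆ σ`, then `T` is `(supp(u) ∪ σ)`-saturated
on `S`. -/
theorem stmt9 {n : ℕ} (L : AddSubgroup (Fin n → ℤ))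
    (σ : Set (Fin n)) (S T : Set (Fin n → ℤ))
    (hS : ∀ s ∈ S, s ∈ L) (hT : ∀ s ∈ T, s ∈ L)
    (hsat : IsSaturatedOn L σ S T)
    (u : Fin n → ℤ) (hu : u ∈ S)
    (hsupp : suppV (vnegPart u) ⊆ σ ∨ suppV (vposPart u) ⊆ σ) :
    IsSaturatedOn L (suppV u ∪ σ) S T :=
  stmt9_general L σ S T hS hsat u hu hsupp
end
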